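/- Let $U\subset\mathbb{R}^d$ be an open convex set, $\Omega\subset\mathbb{R}^d$ open, and $f,F:\mathbb{R}^d\to[0,\infty)$ with $\{f>0\}=\Omega$, $\{F>0\}=U$, $F$ log-concave, $f$ continuous on $\Omega$, and $f=F$ almost everywhere. Then $\Omega\subseteq U$ and $|U\setminus\Omega|=0$. -/

import Mathlib

open MeasureTheory

/-! Where `f` and `F` agree, so do their positivity sets; hence `Ω` and `U` differ by a null set.
An open set that is null outside `U` lies in `closure U`, and since `U` is open and convex,
`interior (closure U) = U`. -/

theorem IsOpen.subset_closure_of_measure_diff_eq_zero {X : Type*} [TopologicalSpace X]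
    [MeasurableSpace X] {μ : Measure X} [μ.IsOpenPosMeasure] {Ω U : Set X} (hΩ : IsOpen Ω)
    (h : μ (Ω \ U) = 0) : Ω ⊆ closure U := by
  have hnull : μ (Ω \ closure U) = 0 := measure_mono_null (by gcongr; exact subset_closure) h
  rw [(hΩ.sdiff isClosed_closure).measure_eq_zero_iff μ] at hnull
  exact Set.sdiff_eq_empty.mp hnull

theorem Convex.subset_of_subset_closure_of_isOpen {E : Type*} [AddCommGroup E] [Module ℝ E]
    [TopologicalSpace E] [IsTopologicalAddGroup E] [ContinuousSMul ℝ E] {U Ω : Set E}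
    (hUconv : Convex ℝ U) (hU : IsOpen U) (hΩ : IsOpen Ω) (hΩU : Ω ⊆ closure U) : Ω ⊆ U := by
  rcases U.eq_empty_or_nonempty with rfl | hne
  · simpa using hΩU
  calc Ω ⊆ interior (closure U) := hΩ.subset_interior_iff.mpr hΩU
    _ = U := by
      rw [hUconv.interior_closure_eq_interior_of_nonempty_interior (by rwa [hU.interior_eq]),
        hU.interior_eq]

theorem Filter.EventuallyEq.setOf_pos {α β : Type*} [Zero β] [LT β] {l : Filter α} {f g : α → β}
    (h : f =ᶠ[l] g) : {x | 0 < f x} =ᶠ[l] {x | 0 < g x} :=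
  h.mono fun x hx => show (0 < f x) = (0 < g x) by rw [hx]

theorem support_comparison_of_ae_eq_general (d : ℕ)
    (U Ω : Set (EuclideanSpace ℝ (Fin d)))
    (hU : IsOpen U) (hUconv : Convex ℝ U) (hΩ : IsOpen Ω)
    (f F : EuclideanSpace ℝ (Fin d) → ℝ)
    (hfΩ : {x | 0 < f x} = Ω) (hFU : {x | 0 < F x} = U)
    (hae : f =ᵐ[volume] F) :
    Ω ⊆ U ∧ volume (U \ Ω) = 0 := by
  obtain ⟨hΩU, hUΩ⟩ := ae_eq_set.mp hae.setOf_pos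
  subst hfΩ hFU
  exact ⟨hUconv.subset_of_subset_closure_of_isOpen hU hΩ
    (hΩ.subset_closure_of_measure_diff_eq_zero hΩU), hUΩ⟩

/-- If `f` is continuous and positive exactly on the open set `Ω`, `F` is log-concave and
positive exactly on the open convex set `U`, and `f = F` almost everywhere, then
`Ω ⊆ U` and `U \ Ω` has Lebesgue measure zero. -/
theorem support_comparison_of_ae_eq (d : ℕ)
    (U Ω : Set (EuclideanSpace ℝ (Fin d)))
    (hU : IsOpen U) (hUconv : Convex ℝ U) (hΩ : IsOpen Ω)
    (f F : EuclideanSpace ℝ (Fin d) → ℝ)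
    (hfnn : ∀ x, 0 ≤ f x) (hFnn : ∀ x, 0 ≤ F x)
    (hfΩ : {x | 0 < f x} = Ω) (hFU : {x | 0 < F x} = U)
    (hFlc : ∀ x y : EuclideanSpace ℝ (Fin d), ∀ s ∈ Set.Icc (0 : ℝ) 1,
      F x ^ (1 - s) * F y ^ s ≤ F ((1 - s) • x + s • y))
    (hfc : ContinuousOn f Ω)
    (hae : f =ᵐ[volume] F) :
    Ω ⊆ U ∧ volume (U \ Ω) = 0 :=
  support_comparison_of_ae_eq_general d U Ω hU hUconv hΩ f F hfΩ hFU hae
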